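/- arXiv:2007.10272 — 2 statements merged into one kernel-verified Lean document; each statement's English description precedes it below -/
import Mathlib

section
/- There are exactly 2^(n-1) thin merge trees with n internal nodes, for n ≥ 1. -/
/-- A merge tree: a full binary tree with left/right-designated children
(the inductive structure records the left/right designation, and equality of
terms is exactly left/right-preserving rooted isomorphism). -/
inductive MergeTree : Type
  | leaf : MergeTree
  | node : MergeTree → MergeTree → MergeTree
  deriving DecidableEq

/-- Number of internal nodes. -/
def MergeTree.numInternal : MergeTree → ℕ
  | .leaf => 0
  | .node l r => l.numInternal + r.numInternal + 1

/-- The number of impasses: internal nodes both of whose children are leaves. -/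
def MergeTree.numImpasses : MergeTree → ℕ
  | .leaf => 0
  | .node .leaf .leaf => 1
  | .node l r => l.numImpasses + r.numImpasses

/-- A merge tree is thin if it has exactly one impasse. -/
def MergeTree.Thin (t : MergeTree) : Prop := t.numImpasses = 1

def spine : List Bool → MergeTree
  | [] => .node .leaf .leaf
  | true :: l => .node (spine l) .leaf
  | false :: l => .node .leaf (spine l)

theorem spine_ne_leaf (l : List Bool) : spine l ≠ .leaf := by
  cases l with
  | nil => simp [spine]
  | cons b l => cases b <;> simp [spine]

theorem spine_internal (l : List Bool) : (spine l).numInternal = l.length + 1 := by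
  induction l with
  | nil => rfl
  | cons b l ih =>
    cases b <;> simp [spine, MergeTree.numInternal, ih]

theorem numImpasses_node_left (t : MergeTree) (ht : t ≠ .leaf) :
    (MergeTree.node t .leaf).numImpasses = t.numImpasses := by
  cases t with
  | leaf => exact absurd rfl ht
  | node a b => simp [MergeTree.numImpasses]

theorem numImpasses_node_right (t : MergeTree) (ht : t ≠ .leaf) :
    (MergeTree.node .leaf t).numImpasses = t.numImpasses := by
  cases t with
  | leaf => exact absurd rfl ht
  | node a b => simp [MergeTree.numImpasses]

theorem spine_thin (l : List Bool) : (spine l).numImpasses = 1 := by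
  induction l with
  | nil => rfl
  | cons b l ih =>
    cases b <;>
      simp [spine, numImpasses_node_left _ (spine_ne_leaf l),
        numImpasses_node_right _ (spine_ne_leaf l), ih]

theorem spine_inj : Function.Injective spine := by
  intro l
  induction l with
  | nil =>
    intro m h
    cases m with
    | nil => rfl
    | cons c m =>
      cases c <;> simp [spine] at h <;>
        first
          | exact absurd h.1.symm (spine_ne_leaf m)
          | exact absurd h.symm (spine_ne_leaf m)
          | exact absurd h.2.symm (spine_ne_leaf m)
          | exact absurd h.1 (spine_ne_leaf m)
          | exact absurd h.2 (spine_ne_leaf m)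
  | cons b l ih =>
    intro m h
    cases m with
    | nil =>
      cases b <;> simp [spine] at h <;>
        first
          | exact absurd h.1 (spine_ne_leaf l)
          | exact absurd h (spine_ne_leaf l)
          | exact absurd h.2 (spine_ne_leaf l)
    | cons c m =>
      cases b <;> cases c <;> simp [spine] at h
      all_goals first
        | exact congrArg _ (ih h)
        | exact absurd h.1 (spine_ne_leaf l)
        | exact absurd h.1.symm (spine_ne_leaf l)
        | exact absurd h.2 (spine_ne_leaf m)
        | exact absurd h.2.symm (spine_ne_leaf m)
        | exact absurd h.1 (spine_ne_leaf m)
        | exact absurd h.1.symm (spine_ne_leaf m)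
        | exact absurd h.2 (spine_ne_leaf l)
        | exact absurd h.2.symm (spine_ne_leaf l)

theorem impasses_pos (t : MergeTree) (ht : t ≠ .leaf) : 1 ≤ t.numImpasses := by
  induction t with
  | leaf => exact absurd rfl ht
  | node a b iha ihb =>
    cases a with
    | leaf =>
      cases b with
      | leaf => simp [MergeTree.numImpasses]
      | node x y =>
        have := ihb (by simp)
        simp [MergeTree.numImpasses] at this ⊢
        omega
    | node x y =>
      have := iha (by simp)
      cases b <;> simp [MergeTree.numImpasses] at this ⊢ <;> omega

theorem spine_surj (t : MergeTree) (ht : t.numImpasses = 1) :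
    ∃ l : List Bool, spine l = t := by
  induction t with
  | leaf => simp [MergeTree.numImpasses] at ht
  | node a b iha ihb =>
    cases a with
    | leaf =>
      cases b with
      | leaf => exact ⟨[], rfl⟩
      | node x y =>
        rw [numImpasses_node_right _ (by simp)] at ht
        obtain ⟨l, hl⟩ := ihb ht
        exact ⟨false :: l, by simp [spine, hl]⟩
    | node x y =>
      cases b with
      | leaf =>
        rw [numImpasses_node_left _ (by simp)] at ht
        obtain ⟨l, hl⟩ := iha ht
        exact ⟨true :: l, by simp [spine, hl]⟩
      | node u v =>
        exfalso
        have ha := impasses_pos (.node x y) (by simp)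
        have hb := impasses_pos (.node u v) (by simp)
        simp [MergeTree.numImpasses] at ht
        omega

/-- There are exactly `2 ^ (n - 1)` thin merge trees with `n` internal nodes. -/
theorem card_thin_mergeTrees (n : ℕ) (hn : 1 ≤ n) :
    {t : MergeTree | t.Thin ∧ t.numInternal = n}.ncard = 2 ^ (n - 1) := by
  have key : {t : MergeTree | t.Thin ∧ t.numInternal = n} =
      (fun l : List.Vector Bool (n-1) => spine l.1) '' Set.univ := by
    ext t
    simp only [Set.mem_setOf_eq, Set.image_univ, Set.mem_range]
    constructor
    · rintro ⟨h1, h2⟩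
      obtain ⟨l, hl⟩ := spine_surj t h1
      have : l.length = n - 1 := by
        have := spine_internal l
        rw [hl] at this
        omega
      exact ⟨⟨l, this⟩, hl⟩
    · rintro ⟨⟨l, hl⟩, rfl⟩
      refine ⟨spine_thin l, ?_⟩
      rw [spine_internal, hl]
      omega
  have hinj : Function.Injective (fun l : List.Vector Bool (n-1) => spine l.1) :=
    fun a b h => Subtype.ext (spine_inj h)
  rw [key, Set.ncard_image_of_injective Set.univ hinj,
    Set.ncard_univ, Nat.card_eq_fintype_card, card_vector, Fintype.card_bool]
end

section
/- If f is a discrete Morse function on a finite tree T and S is a set of edges of T such that for every edge e = uv in S, both f(u) and f(v) are, among the critical values of f that are less than f(e) and lie in the respective components of u and v in the sublevel complex below f(e), realized only by the vertices u and v themselves, then no two distinct edges of S share a vertex; consequently the number of impasses of the induced merge tree is at most the matching number of T. -/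
/-- Number of leaves. -/
def MergeTree.numLeaves : MergeTree → ℕ
  | .leaf => 1
  | .node l r => l.numLeaves + r.numLeaves

section DMT

variable {V : Type} (G : SimpleGraph V) (fV : V → ℝ) (fE : Sym2 V → ℝ)

/-- A discrete Morse function on the graph `G`, given by its values `fV` on vertices and
`fE` on edges: it is weakly increasing, at most 2-to-1, and simplices sharing a value
must be incident (in particular it is injective on vertices and on edges). -/
def IsDMF : Prop :=
  (∀ v : V, ∀ e ∈ G.edgeSet, v ∈ e → fV v ≤ fE e) ∧
  (∀ u v : V, fV u = fV v → u = v) ∧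
  (∀ e ∈ G.edgeSet, ∀ e' ∈ G.edgeSet, fE e = fE e' → e = e') ∧
  (∀ v : V, ∀ e ∈ G.edgeSet, fV v = fE e → v ∈ e)

/-- `v` is a critical vertex: no incident edge shares its value. -/
def CritV (v : V) : Prop := ∀ e ∈ G.edgeSet, v ∈ e → fV v ≠ fE e

/-- `e` is a critical edge: it is an edge and no endpoint shares its value. -/
def CritE (e : Sym2 V) : Prop := e ∈ G.edgeSet ∧ ∀ v ∈ e, fV v ≠ fE e

/-- All simplices are critical (`f` is injective on all simplices): a critical
discrete Morse function. -/
def AllCritical : Prop := ∀ v : V, ∀ e ∈ G.edgeSet, fV v ≠ fE e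

/-- The sublevel subcomplex: the subgraph of `G` on the vertex set `S` with the edges of
value `< c`. -/
def sublevel (S : Set V) (c : ℝ) : SimpleGraph V where
  Adj a b := G.Adj a b ∧ a ∈ S ∧ b ∈ S ∧ fE s(a, b) < c
  symm := by
    constructor
    intro a b h
    exact ⟨h.1.symm, h.2.2.1, h.2.1, by rw [Sym2.eq_swap]; exact h.2.2.2⟩
  loopless := by constructor; intro a h; exact G.loopless.irrefl a h.1

/-- The connected component of the vertex `u` in the sublevel subcomplex of `(S, c)`. -/
def compOf (S : Set V) (c : ℝ) (u : V) : Set V :=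
  {w | (sublevel G fE S c).Reachable u w}

/-- `IsInduced G fV fE S c d t` says that `t` is the merge tree induced by the discrete
Morse function on the connected subcomplex with vertex set `S` and edges of value `< c`,
where `d` records the direction (L = `true`, R = `false`) assigned to the corresponding
node.  A component whose largest critical value is attained at a vertex yields a leaf;
otherwise the largest critical value is at a critical edge `s(u,v)`, whose node has the
two children induced on the components of `u` and `v` just below the edge's value, the
component containing the smaller minimum value inheriting the direction `d` and the
other receiving the opposite direction; the child with direction L is the left child. -/
inductive IsInduced : Set V → ℝ → Bool → MergeTree → Prop
  | leaf (S : Set V) (c : ℝ) (d : Bool) (w : V) :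
      w ∈ S → fV w < c → CritV G fV fE w →
      (∀ x ∈ S, fV x < c → CritV G fV fE x → fV x ≤ fV w) →
      (∀ e ∈ G.edgeSet, (∀ x ∈ e, x ∈ S) → fE e < c → CritE G fV fE e → fE e ≤ fV w) →
      IsInduced S c d .leaf
  | node (S : Set V) (c : ℝ) (d : Bool) (u v : V) (du : Bool) (tu tv : MergeTree) :
      G.Adj u v → u ∈ S → v ∈ S → fE s(u, v) < c → CritE G fV fE s(u, v) →
      (∀ x ∈ S, fV x < c → CritV G fV fE x → fV x ≤ fE s(u, v)) →
      (∀ e ∈ G.edgeSet, (∀ x ∈ e, x ∈ S) → fE e < c → CritE G fV fE e →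
        fE e ≤ fE s(u, v)) →
      IsInduced (compOf G fE S (fE s(u, v)) u) (fE s(u, v)) du tu →
      IsInduced (compOf G fE S (fE s(u, v)) v) (fE s(u, v)) (!du) tv →
      (du = d ↔ sInf (fV '' compOf G fE S (fE s(u, v)) u) <
        sInf (fV '' compOf G fE S (fE s(u, v)) v)) →
      IsInduced S c d (if du then .node tu tv else .node tv tu)

/-- `t` is the merge tree induced by the discrete Morse function `(fV, fE)` on `G`:
the construction applied to the whole complex, the root receiving direction L. -/
def InducedBy (t : MergeTree) : Prop :=
  ∃ c : ℝ, (∀ v : V, fV v < c) ∧ (∀ e ∈ G.edgeSet, fE e < c) ∧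
    IsInduced G fV fE Set.univ c true t

end DMT

/-- The star graph `S_n = K_{1,n-1}` on `n` vertices: vertex `0` is the center,
adjacent to all other vertices, and there are no other edges. -/
def starGraph (n : ℕ) : SimpleGraph (Fin n) :=
  SimpleGraph.fromRel (fun i _ => i.val = 0)

/-!
If two edges of `S` share a vertex `x`, the lower one is a critical edge lying in the
component of `x` below the higher one, which the hypothesis on `S` forbids; as `f` is
injective on edges, two distinct edges of `S` cannot meet.

For the impasse bound one builds a matching along the recursive construction of the merge
tree: an impasse is a critical edge `uv` whose two sides are leaves, and distinct impasses
give disjoint edges because the two children of a node live on the two components of `T`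
minus the node's edge, which are disjoint since every edge of a tree is a bridge.
-/

namespace MergeTree

lemma numImpasses_node_comm (l r : MergeTree) :
    (node l r).numImpasses = (node r l).numImpasses := by
  cases l <;> cases r <;> simp [numImpasses, Nat.add_comm]

lemma numImpasses_node_of_not_leaf {l r : MergeTree} (h : ¬(l = leaf ∧ r = leaf)) :
    (node l r).numImpasses = l.numImpasses + r.numImpasses := by
  cases l <;> cases r <;> simp_all [numImpasses]

end MergeTree

namespace SimpleGraph

variable {V : Type} {G : SimpleGraph V}

lemma Subgraph.ncard_edgeSet_sup [Finite V] {M N : G.Subgraph}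
    (h : Disjoint M.verts N.verts) :
    (M ⊔ N).edgeSet.ncard = M.edgeSet.ncard + N.edgeSet.ncard := by
  rw [Subgraph.edgeSet_sup]
  refine Set.ncard_union_eq (Set.disjoint_left.mpr fun e heM heN => ?_)
    (Set.toFinite _) (Set.toFinite _)
  induction e with
  | h a b => exact Set.disjoint_left.mp h (M.edge_vert heM) (N.edge_vert heN)

lemma ncard_edgeSet_le_sSup_isMatching [Finite V] {M : G.Subgraph} (hM : M.IsMatching) :
    M.edgeSet.ncard ≤ sSup {k : ℕ | ∃ M : G.Subgraph, M.IsMatching ∧ M.edgeSet.ncard = k} :=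
  le_csSup ⟨Nat.card (Sym2 V), by
    rintro k ⟨N, -, rfl⟩
    exact Set.ncard_le_card N.edgeSet⟩ ⟨M, hM, rfl⟩

end SimpleGraph

open SimpleGraph

section Sublevel

variable {V : Type} {G : SimpleGraph V} {fE : Sym2 V → ℝ}

lemma compOf_subset {S : Set V} {c : ℝ} {u : V} (hu : u ∈ S) :
    compOf G fE S c u ⊆ S := by
  rintro w ⟨p⟩
  induction p with
  | nil => exact hu
  | cons h _ ih => exact ih h.2.2.1

lemma mem_compOf_of_mem_edge {S : Set V} {c : ℝ} {x : V} {e : Sym2 V} (he : e ∈ G.edgeSet)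
    (hS : ∀ w ∈ e, w ∈ S) (hlt : fE e < c) (hx : x ∈ e) :
    ∀ w ∈ e, w ∈ compOf G fE S c x := by
  obtain ⟨y, rfl⟩ : ∃ y, s(x, y) = e := ⟨_, Sym2.other_spec hx⟩
  intro w hw
  rcases Sym2.mem_iff.mp hw with rfl | rfl
  · exact Reachable.refl _
  · exact Adj.reachable ⟨he, hS _ (Sym2.mem_mk_left _ _), hS _ (Sym2.mem_mk_right _ _), hlt⟩

lemma sublevel_le_deleteEdges (S : Set V) (e : Sym2 V) :
    sublevel G fE S (fE e) ≤ G.deleteEdges {e} := by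
  intro a b hab
  exact (deleteEdges_adj ..).mpr
    ⟨hab.1, fun h => hab.2.2.2.ne (congrArg fE (Set.mem_singleton_iff.mp h))⟩

lemma disjoint_compOf_of_adj (hG : G.IsAcyclic) (S : Set V) {u v : V} (huv : G.Adj u v) :
    Disjoint (compOf G fE S (fE s(u, v)) u) (compOf G fE S (fE s(u, v)) v) :=
  Set.disjoint_left.mpr fun _ hwu hwv =>
    isAcyclic_iff_forall_adj_isBridge.mp hG huv
      ((hwu.trans hwv.symm).mono (sublevel_le_deleteEdges S _))

end Sublevel

section Matching

variable {V : Type} {G : SimpleGraph V} {fV : V → ℝ} {fE : Sym2 V → ℝ}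

lemma notMem_of_fE_lt {S : Set (Sym2 V)} (hSE : S ⊆ G.edgeSet)
    (hS : ∀ u v : V, s(u, v) ∈ S → CritE G fV fE s(u, v) ∧
      ∀ e' ∈ G.edgeSet, fE e' < fE s(u, v) → CritE G fV fE e' →
        ¬ ∀ x ∈ e', x ∈ compOf G fE Set.univ (fE s(u, v)) u)
    {e₁ e₂ : Sym2 V} (he₁ : e₁ ∈ S) (he₂ : e₂ ∈ S) (hlt : fE e₁ < fE e₂)
    {x : V} (hx : x ∈ e₁) : x ∉ e₂ := by
  intro hx₂
  obtain ⟨y, rfl⟩ : ∃ y, s(x, y) = e₂ := ⟨_, Sym2.other_spec hx₂⟩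
  obtain ⟨z, rfl⟩ : ∃ z, s(x, z) = e₁ := ⟨_, Sym2.other_spec hx⟩
  exact (hS x y he₂).2 _ (hSE he₁) hlt (hS x z he₁).1
    (mem_compOf_of_mem_edge (hSE he₁) (fun _ _ => Set.mem_univ _) hlt hx)

lemma exists_isMatching_of_isInduced [Finite V] (hG : G.IsAcyclic)
    {S : Set V} {c : ℝ} {d : Bool} {t : MergeTree} (h : IsInduced G fV fE S c d t) :
    ∃ M : G.Subgraph, M.IsMatching ∧ M.verts ⊆ S ∧ t.numImpasses ≤ M.edgeSet.ncard := by
  induction h with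
  | leaf =>
    exact ⟨⊥, fun _ hv => hv.elim, Set.empty_subset _, by simp [MergeTree.numImpasses]⟩
  | node S c d u v du tu tv huv hu hv _ _ _ _ _ _ _ ihu ihv =>
    obtain ⟨Mu, hMu, hMuS, hMut⟩ := ihu
    obtain ⟨Mv, hMv, hMvS, hMvt⟩ := ihv
    have hdisj : Disjoint Mu.verts Mv.verts :=
      (disjoint_compOf_of_adj hG S huv).mono hMuS hMvS
    have hnum : (if du then MergeTree.node tu tv else .node tv tu).numImpasses =
        (MergeTree.node tu tv).numImpasses := by
      cases du
      · exact MergeTree.numImpasses_node_comm tv tu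
      · rfl
    rw [hnum]
    by_cases hleaf : tu = .leaf ∧ tv = .leaf
    · obtain ⟨rfl, rfl⟩ := hleaf
      refine ⟨G.subgraphOfAdj huv, .subgraphOfAdj huv, ?_, ?_⟩
      · rintro x (rfl | rfl)
        exacts [hu, hv]
      · simp [MergeTree.numImpasses]
    · refine ⟨Mu ⊔ Mv, hMu.sup hMv
        (hdisj.mono Mu.support_subset_verts Mv.support_subset_verts), ?_, ?_⟩
      · exact Set.union_subset (hMuS.trans (compOf_subset hu))
          (hMvS.trans (compOf_subset hv))
      · rw [MergeTree.numImpasses_node_of_not_leaf hleaf, Subgraph.ncard_edgeSet_sup hdisj]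
        omega

end Matching

/-- Let `f` be a discrete Morse function on a finite tree `T` and `S` a set of edges
of `T` such that for every edge `e = s(u,v)` in `S`, among the critical simplices with
value less than `f e` lying in the respective components of `u` and `v` in the
sublevel complex below `f e`, the values `f u` and `f v` are realized only by the
vertices `u` and `v` themselves (i.e. the only such critical simplices are `u` and
`v`).  Then no two distinct edges of `S` share a vertex; consequently the number of
impasses of the induced merge tree is at most the matching number of `T`. -/
theorem impasses_le_matching_number {V : Type} [Fintype V] (G : SimpleGraph V)
    (htree : G.IsTree) (fV : V → ℝ) (fE : Sym2 V → ℝ)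
    (hf : IsDMF G fV fE)
    (S : Set (Sym2 V)) (hSE : S ⊆ G.edgeSet)
    (hS : ∀ u v : V, s(u, v) ∈ S →
      CritE G fV fE s(u, v) ∧
      (∀ w ∈ compOf G fE Set.univ (fE s(u, v)) u,
        fV w < fE s(u, v) → CritV G fV fE w → w = u) ∧
      (∀ w ∈ compOf G fE Set.univ (fE s(u, v)) v,
        fV w < fE s(u, v) → CritV G fV fE w → w = v) ∧
      (∀ e' ∈ G.edgeSet, fE e' < fE s(u, v) → CritE G fV fE e' →
        ¬ (∀ x ∈ e', x ∈ compOf G fE Set.univ (fE s(u, v)) u)) ∧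
      (∀ e' ∈ G.edgeSet, fE e' < fE s(u, v) → CritE G fV fE e' →
        ¬ (∀ x ∈ e', x ∈ compOf G fE Set.univ (fE s(u, v)) v))) :
    -- no two distinct edges of S share a vertex (S forms a matching of T)
    (∀ e₁ ∈ S, ∀ e₂ ∈ S, e₁ ≠ e₂ → ∀ x : V, x ∈ e₁ → x ∉ e₂) ∧
    -- consequently, the number of impasses of the induced merge tree is at most ν(T)
    (∀ t : MergeTree, InducedBy G fV fE t →
      t.numImpasses ≤ sSup {k : ℕ | ∃ M : G.Subgraph,
        M.IsMatching ∧ M.edgeSet.ncard = k}) := by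
  refine ⟨fun e₁ he₁ e₂ he₂ hne x hx₁ hx₂ => ?_, fun t ⟨c, _, _, ht⟩ => ?_⟩
  · have hS' := fun u v h => And.intro (hS u v h).1 (hS u v h).2.2.2.1
    rcases lt_trichotomy (fE e₁) (fE e₂) with hlt | heq | hgt
    · exact notMem_of_fE_lt hSE hS' he₁ he₂ hlt hx₁ hx₂
    · exact hne (hf.2.2.1 _ (hSE he₁) _ (hSE he₂) heq)
    · exact notMem_of_fE_lt hSE hS' he₂ he₁ hgt hx₂ hx₁
  · obtain ⟨M, hM, -, hle⟩ := exists_isMatching_of_isInduced htree.isAcyclic ht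
    exact hle.trans (ncard_edgeSet_le_sSup_isMatching hM)
end
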